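/- arXiv:1802.06879 — 2 statements merged into one kernel-verified Lean document; each statement's English description precedes it below -/
import Mathlib

section
/- Let (X,b,m) be a connected, locally finite, countably infinite weighted graph and fix x₀∈X. If there is a constant C>0 such that D_-(r) ≤ C·r for all r≥1, where D_-(r)=max_{x∈S_r} Deg_-(x), then for every λ<0 there exists a function v : X→(0,∞) which vanishes at infinity and satisfies 𝓛v(x) ≥ λ·v(x) for every x∈X; in particular the graph satisfies the Feller property. -/
/-- A function on a countable set vanishes at infinity if, for every `ε > 0`,
the set where `|f| ≥ ε` is finite. -/
def VanishesAtInfty {V : Type*} (f : V → ℝ) : Prop :=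
  ∀ ε > (0 : ℝ), {x | ε ≤ |f x|}.Finite

/-- `(X, b, m)` is a weighted graph: nonnegative symmetric edge weight with vanishing
diagonal, locally finite, positive measure, connected. -/
def IsWeightedGraph {V : Type*} (b : V → V → ℝ) (m : V → ℝ) : Prop :=
  (∀ x y, 0 ≤ b x y) ∧ (∀ x y, b x y = b y x) ∧ (∀ x, b x x = 0) ∧
    (∀ x, {y | 0 < b x y}.Finite) ∧ (∀ x, 0 < m x) ∧
    (∀ x y, Relation.ReflTransGen (fun a c => 0 < b a c) x y)

/-- The formal graph Laplacian `𝓛f(x) = (1/m x) ∑_y b x y (f x − f y)`. -/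
noncomputable def lap {V : Type*} (b : V → V → ℝ) (m : V → ℝ) (f : V → ℝ) (x : V) : ℝ :=
  (1 / m x) * ∑' y, b x y * (f x - f y)

/-- The weighted degree `Deg(x) = (1/m x) ∑_y b x y`. -/
noncomputable def deg {V : Type*} (b : V → V → ℝ) (m : V → ℝ) (x : V) : ℝ :=
  (1 / m x) * ∑' y, b x y

/-- The combinatorial graph metric: the least length of a path of edges joining `x` to `y`. -/
noncomputable def graphDist {V : Type*} (b : V → V → ℝ) (x y : V) : ℕ :=
  sInf {n | ∃ f : ℕ → V, f 0 = x ∧ f n = y ∧ ∀ i < n, 0 < b (f i) (f (i + 1))}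

/-- The sphere `S_r = {x | d(x,x₀) = r}` around `x₀`. -/
def sphere' {V : Type*} (b : V → V → ℝ) (x₀ : V) (r : ℕ) : Set V :=
  {x | graphDist b x₀ x = r}

/-- The inner degree `Deg_-(x) = (1/m x) ∑_{y ∈ S_{d(x₀,x)−1}} b x y` of a vertex `x`
(with respect to the centre `x₀`). -/
noncomputable def degMinus {V : Type*} (b : V → V → ℝ) (m : V → ℝ) (x₀ : V) (x : V) : ℝ :=
  (1 / m x) * ∑' y, (if graphDist b x₀ y + 1 = graphDist b x₀ x then b x y else 0)

/-!
Take `v = α ∘ d(x₀, ·)` with `α_r = ∏_{k<r} (1 + μ/(C(k+1)))⁻¹` and `μ = -λ`, so that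
`C(r+1)(α_{r+1} - α_r) = -μ α_{r+1}`. As `α` is decreasing, at `x ∈ S_{r+1}` the neighbours in
`S_r` contribute `Deg_-(x)(α_{r+1} - α_r) ≥ C(r+1)(α_{r+1} - α_r) = λ v(x)` to `𝓛v(x)`, and the
other neighbours, lying in `S_{r+1} ∪ S_{r+2}`, contribute nonnegatively. Finally
`α_r⁻¹ ≥ 1 + (μ/C) ∑_{k=1}^r 1/k` diverges, so `α_r → 0`, and `v` vanishes at infinity because
balls are finite.
-/

open Filter Topology Finset

lemma one_add_sum_le_prod_one_add {ι : Type*} {f : ι → ℝ} (s : Finset ι)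
    (hf : ∀ i ∈ s, 0 ≤ f i) : 1 + ∑ i ∈ s, f i ≤ ∏ i ∈ s, (1 + f i) := by
  classical
  induction s using Finset.induction_on with
  | empty => simp
  | insert a s ha ih =>
    rw [sum_insert ha, prod_insert ha]
    have hfa := hf a (mem_insert_self a s)
    have hprod : 1 ≤ ∏ i ∈ s, (1 + f i) :=
      one_le_prod fun i hi => le_add_of_nonneg_right (hf i (mem_insert_of_mem hi))
    nlinarith [ih fun i hi => hf i (mem_insert_of_mem hi)]

lemma tendsto_prod_inv_one_add_atTop_zero {a : ℕ → ℝ} (ha : ∀ k, 0 ≤ a k)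
    (hsum : Tendsto (fun r => ∑ k ∈ range r, a k) atTop atTop) :
    Tendsto (fun r => ∏ k ∈ range r, (1 + a k)⁻¹) atTop (𝓝 0) := by
  simp_rw [prod_inv_distrib]
  refine tendsto_inv_atTop_zero.comp
    (tendsto_atTop_mono (fun r => ?_) (tendsto_atTop_add_const_left _ 1 hsum))
  exact one_add_sum_le_prod_one_add _ fun k _ => ha k

noncomputable def radialDecay (C μ : ℝ) (r : ℕ) : ℝ :=
  ∏ k ∈ range r, (1 + μ / (C * (k + 1)))⁻¹

section radialDecay

variable {C μ : ℝ}

lemma radialDecay_succ (r : ℕ) :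
    radialDecay C μ (r + 1) = radialDecay C μ r * (1 + μ / (C * (r + 1)))⁻¹ :=
  prod_range_succ _ r

lemma radialDecay_factor_pos (hC : 0 ≤ C) (hμ : 0 ≤ μ) (k : ℕ) : 0 < 1 + μ / (C * (k + 1)) := by
  positivity

lemma radialDecay_pos (hC : 0 ≤ C) (hμ : 0 ≤ μ) (r : ℕ) : 0 < radialDecay C μ r :=
  prod_pos fun k _ => inv_pos.2 (radialDecay_factor_pos hC hμ k)

lemma radialDecay_antitone (hC : 0 ≤ C) (hμ : 0 ≤ μ) : Antitone (radialDecay C μ) := by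
  refine antitone_nat_of_succ_le fun r => ?_
  rw [radialDecay_succ]
  exact mul_le_of_le_one_right (radialDecay_pos hC hμ r).le
    (inv_le_one_of_one_le₀ (le_add_of_nonneg_right (by positivity)))

lemma radialDecay_succ_sub (hC : 0 < C) (hμ : 0 ≤ μ) (r : ℕ) :
    C * (r + 1) * (radialDecay C μ (r + 1) - radialDecay C μ r) = -μ * radialDecay C μ (r + 1) := by
  have hfactor := (radialDecay_factor_pos hC.le hμ r).ne'
  rw [radialDecay_succ]
  generalize radialDecay C μ r = a
  field_simp
  ring

lemma radialDecay_tendsto_zero (hC : 0 < C) (hμ : 0 < μ) :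
    Tendsto (radialDecay C μ) atTop (𝓝 0) := by
  refine tendsto_prod_inv_one_add_atTop_zero (fun k => by positivity) ?_
  have hharmonic := Real.tendsto_sum_range_one_div_nat_succ_atTop.const_mul_atTop (div_pos hμ hC)
  refine hharmonic.congr fun r => ?_
  rw [mul_sum]
  refine sum_congr rfl fun k _ => ?_
  field_simp

end radialDecay

def HasWalk {V : Type*} (b : V → V → ℝ) (x y : V) (n : ℕ) : Prop :=
  ∃ f : ℕ → V, f 0 = x ∧ f n = y ∧ ∀ i < n, 0 < b (f i) (f (i + 1))

section Walks

variable {V : Type*} {b : V → V → ℝ} {x y z : V} {n : ℕ}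

lemma hasWalk_zero_iff : HasWalk b x y 0 ↔ x = y :=
  ⟨fun ⟨f, hf0, hfn, _⟩ => hf0 ▸ hfn, fun h => ⟨fun _ => x, rfl, h, by simp⟩⟩

lemma HasWalk.snoc (h : HasWalk b x y n) (hyz : 0 < b y z) : HasWalk b x z (n + 1) := by
  obtain ⟨f, hf0, hfn, hstep⟩ := h
  refine ⟨fun i => if i ≤ n then f i else z, by simp [hf0], by simp, fun i hi => ?_⟩
  rcases Nat.lt_or_ge i n with hin | hin
  · simpa [hin.le, Nat.succ_le_of_lt hin] using hstep i hin
  · obtain rfl : i = n := by omega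
    simpa [hfn] using hyz

lemma HasWalk.exists_pred (h : HasWalk b x z (n + 1)) : ∃ y, HasWalk b x y n ∧ 0 < b y z := by
  obtain ⟨f, hf0, hfn, hstep⟩ := h
  exact ⟨f n, ⟨f, hf0, rfl, fun i hi => hstep i (by omega)⟩, hfn ▸ hstep n n.lt_succ_self⟩

lemma exists_hasWalk (h : Relation.ReflTransGen (fun a c => 0 < b a c) x y) :
    ∃ n, HasWalk b x y n := by
  induction h with
  | refl => exact ⟨0, hasWalk_zero_iff.2 rfl⟩
  | tail _ hyz ih =>
    obtain ⟨n, hn⟩ := ih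
    exact ⟨n + 1, hn.snoc hyz⟩

lemma hasWalk_graphDist (h : Relation.ReflTransGen (fun a c => 0 < b a c) x y) :
    HasWalk b x y (graphDist b x y) :=
  Nat.sInf_mem (exists_hasWalk h)

lemma graphDist_le_of_hasWalk (h : HasWalk b x y n) : graphDist b x y ≤ n :=
  Nat.sInf_le h

lemma graphDist_le_succ_of_pos (h : Relation.ReflTransGen (fun a c => 0 < b a c) x y)
    (hyz : 0 < b y z) : graphDist b x z ≤ graphDist b x y + 1 :=
  graphDist_le_of_hasWalk ((hasWalk_graphDist h).snoc hyz)

lemma finite_setOf_hasWalk (hfin : ∀ y, {z | 0 < b y z}.Finite) (x : V) :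
    ∀ n, {y | HasWalk b x y n}.Finite
  | 0 => (Set.finite_singleton x).subset fun y hy => (hasWalk_zero_iff.1 hy).symm
  | n + 1 => ((finite_setOf_hasWalk hfin x n).biUnion fun y _ => hfin y).subset fun z hz => by
      obtain ⟨y, hy, hyz⟩ := HasWalk.exists_pred hz
      exact Set.mem_biUnion hy hyz

lemma finite_setOf_graphDist_le (hconn : ∀ y, Relation.ReflTransGen (fun a c => 0 < b a c) x y)
    (hfin : ∀ y, {z | 0 < b y z}.Finite) (R : ℕ) : {y | graphDist b x y ≤ R}.Finite := by
  refine ((Set.finite_Iic R).biUnion fun n _ => finite_setOf_hasWalk hfin x n).subset fun y hy => ?_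
  exact Set.mem_biUnion (Set.mem_Iic.2 hy) (hasWalk_graphDist (hconn y))

end Walks

section WeightedGraph

variable {V : Type*} {b : V → V → ℝ} {m : V → ℝ}

lemma vanishesAtInfty_comp_graphDist (hwg : IsWeightedGraph b m) (x₀ : V) {α : ℕ → ℝ}
    (hα : Tendsto α atTop (𝓝 0)) : VanishesAtInfty fun x => α (graphDist b x₀ x) := by
  obtain ⟨-, -, -, hfin, -, hconn⟩ := hwg
  intro ε hε
  obtain ⟨R, hR⟩ := eventually_atTop.1 ((abs_zero (α := ℝ) ▸ hα.abs).eventually (gt_mem_nhds hε))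
  refine (finite_setOf_graphDist_le (hconn x₀) hfin R).subset fun x hx => ?_
  by_contra hxR
  exact (hR _ (not_le.1 hxR).le).not_ge hx

/-- At `x = x₀` the left side is `0`, since `Deg_-(x₀) = 0` and `0 - 1 = 0` in `ℕ`. -/
lemma degMinus_mul_sub_le_lap (hwg : IsWeightedGraph b m) (x₀ : V) {α : ℕ → ℝ}
    (hα : Antitone α) (x : V) :
    degMinus b m x₀ x * (α (graphDist b x₀ x) - α (graphDist b x₀ x - 1)) ≤
      lap b m (fun y => α (graphDist b x₀ y)) x := by
  obtain ⟨hb0, hsym, -, hfin, hm, hconn⟩ := hwg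
  set d := graphDist b x₀
  have hpos : ∀ y, b x y ≠ 0 → 0 < b x y := fun y h => (hb0 x y).lt_of_ne' h
  have hterm : ∀ y, (if d y + 1 = d x then b x y else 0) * (α (d x) - α (d x - 1)) ≤
      b x y * (α (d x) - α (d y)) := by
    intro y
    by_cases hxy : d y + 1 = d x
    · rw [if_pos hxy, show d x - 1 = d y by omega]
    rw [if_neg hxy, zero_mul]
    rcases (hb0 x y).eq_or_lt with hzero | hadj
    · rw [← hzero, zero_mul]
    have : d x ≤ d y + 1 := graphDist_le_succ_of_pos (hconn x₀ y) (hsym x y ▸ hadj)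
    exact mul_nonneg hadj.le (sub_nonneg.2 (hα (by omega)))
  rw [degMinus, lap, mul_assoc, ← tsum_mul_right]
  refine mul_le_mul_of_nonneg_left (Summable.tsum_le_tsum hterm ?_ ?_) (by simp [(hm x).le])
  · refine summable_of_hasFiniteSupport ((hfin x).subset fun y hy => hpos y ?_)
    by_contra hzero
    simp [hzero] at hy
  · exact summable_of_hasFiniteSupport ((hfin x).subset fun y hy => hpos y (left_ne_zero_of_mul hy))

end WeightedGraph

theorem stmt3_general {V : Type*}
    (b : V → V → ℝ) (m : V → ℝ) (hwg : IsWeightedGraph b m) (x₀ : V)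
    (D : ℕ → ℝ)
    (hD : ∀ r : ℕ, 1 ≤ r →
      IsGreatest (degMinus b m x₀ '' sphere' b x₀ r) (D r))
    (C : ℝ) (hC : 0 < C)
    (hgrow : ∀ r : ℕ, 1 ≤ r → D r ≤ C * r) :
    ∀ lam : ℝ, lam < 0 → ∃ v : V → ℝ,
      (∀ x, 0 < v x) ∧ VanishesAtInfty v ∧ ∀ x, lam * v x ≤ lap b m v x := by
  intro lam hlam
  have hμ : 0 < -lam := neg_pos.2 hlam
  set α := radialDecay C (-lam)
  have hαpos : ∀ r, 0 < α r := radialDecay_pos hC.le hμ.le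
  have hα : Antitone α := radialDecay_antitone hC.le hμ.le
  refine ⟨fun x => α (graphDist b x₀ x), fun x => hαpos _,
    vanishesAtInfty_comp_graphDist hwg x₀ (radialDecay_tendsto_zero hC hμ),
    fun x => le_trans ?_ (degMinus_mul_sub_le_lap hwg x₀ hα x)⟩
  beta_reduce
  rcases hx : graphDist b x₀ x with _ | r
  · simpa using mul_nonpos_of_nonpos_of_nonneg hlam.le (hαpos 0).le
  have hdeg : degMinus b m x₀ x ≤ C * (r + 1) := by
    have := (hD (r + 1) r.succ_pos).2 ⟨x, hx, rfl⟩
    exact_mod_cast this.trans (hgrow (r + 1) r.succ_pos)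
  calc lam * α (r + 1) = C * (r + 1) * (α (r + 1) - α r) := by
        rw [radialDecay_succ_sub hC hμ.le, neg_neg]
    _ ≤ degMinus b m x₀ x * (α (r + 1) - α (r + 1 - 1)) :=
        mul_le_mul_of_nonpos_right hdeg (sub_nonpos.2 (hα r.le_succ))

/-- Corollary: if `D_-(r) = max_{x ∈ S_r} Deg_-(x)` grows at most linearly,
`D_-(r) ≤ C·r` for all `r ≥ 1`, then for every `λ < 0` there is a positive function `v`
vanishing at infinity with `𝓛v ≥ λ·v`; in particular the graph is Feller. -/
theorem stmt3 {V : Type*} [Countable V] [Infinite V]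
    (b : V → V → ℝ) (m : V → ℝ) (hwg : IsWeightedGraph b m) (x₀ : V)
    (D : ℕ → ℝ)
    (hD : ∀ r : ℕ, 1 ≤ r →
      IsGreatest (degMinus b m x₀ '' sphere' b x₀ r) (D r))
    (C : ℝ) (hC : 0 < C)
    (hgrow : ∀ r : ℕ, 1 ≤ r → D r ≤ C * r) :
    ∀ lam : ℝ, lam < 0 → ∃ v : V → ℝ,
      (∀ x, 0 < v x) ∧ VanishesAtInfty v ∧ ∀ x, lam * v x ≤ lap b m v x :=
  stmt3_general b m hwg x₀ D hD C hC hgrow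
end

section
/- Let π : X̃→X, with deck group Γ, be a regular covering of a connected, locally finite weighted graph (X,b,m), and let p, p̃ be nonnegative kernels satisfying the covering identity p_t(x,y) = ∑_{ỹ∈π⁻¹(y)} p̃_t(x̃,ỹ) for all t>0, x,y∈X, x̃∈π⁻¹(x). Define the Green's functions g(x,x) = ∫₀^∞ p_t(x,x) dt and g̃(x̃,x̃) = ∫₀^∞ p̃_t(x̃,x̃) dt. (a) g̃(x̃,x̃) ≤ g(π(x̃),π(x̃)) for every x̃∈X̃; hence if there is C>0 with g(x,x) ≤ C for all x∈X (the base is uniformly transient), then g̃(x̃,x̃) ≤ C for all x̃∈X̃ (the cover is uniformly transient). (b) If moreover every fiber has exactly n<∞ elements, p̃ is Γ-invariant, and p̃ is positive semidefinite (∑_{ã,b̃} p̃_t(ã,b̃)f(ã)f(b̃)m̃(ã)m̃(b̃) ≥ 0 for all finitely supported f), then g(x,x) ≤ n·g̃(x̃,x̃) for x̃∈π⁻¹(x); hence if g̃(x̃,x̃) ≤ C for all x̃, then g(x,x) ≤ n·C for all x∈X. -/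
open Filter Topology

/-- `π : (X̃, b̃, m̃) → (X, b, m)` is a regular covering of weighted graphs with deck
transformation group `Γ`: `π` is surjective, maps the neighbourhood of each `x̃`
bijectively onto the neighbourhood of `π x̃`, the weights and measures are compatible,
every `γ ∈ Γ` is an automorphism over `π`, and `Γ` acts transitively on each fiber. -/
def IsRegularCovering {X Xc : Type*} (b : X → X → ℝ) (m : X → ℝ)
    (bc : Xc → Xc → ℝ) (mc : Xc → ℝ) (π : Xc → X)
    (Γ : Subgroup (Equiv.Perm Xc)) : Prop :=
  Function.Surjective π ∧
    (∀ xc, Set.BijOn π {yc | 0 < bc xc yc} {y | 0 < b (π xc) y}) ∧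
    (∀ xc yc, 0 < bc xc yc → bc xc yc = b (π xc) (π yc)) ∧
    (∀ xc, mc xc = m (π xc)) ∧
    (∀ γ ∈ Γ, ∀ xc, π (γ xc) = π xc) ∧
    (∀ γ ∈ Γ, ∀ xc yc, bc (γ xc) (γ yc) = bc xc yc) ∧
    (∀ xc yc, π xc = π yc → ∃ γ ∈ Γ, γ xc = yc)

open scoped ENNReal

/-- The diagonal Green's function `g(x,x) = ∫₀^∞ p_t(x,x) dt`, valued in `[0,∞]`. -/
noncomputable def greenDiag {V : Type*} (p : ℝ → V → V → ℝ) (x : V) : ℝ≥0∞ :=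
  ∫⁻ t in Set.Ioi (0 : ℝ), ENNReal.ofReal (p t x x)

/-!
Part (a) is termwise: the diagonal term `p̃_t(x̃,x̃)` is one summand of the nonnegative fiber
sum `p_t(x,x)`. For part (b), positive semidefiniteness tested on `δ_ã/m̃(ã) − δ_c̃/m̃(c̃)` gives
`p̃_t(ã,c̃) + p̃_t(c̃,ã) ≤ p̃_t(ã,ã) + p̃_t(c̃,c̃)`, and the diagonal is constant on a fiber `F` by
invariance and transitivity of `Γ`. Summing over `ã, c̃ ∈ F` and using the covering identity at
every base point `ã ∈ F` gives `n · p_t(x,x) = ∑_{ã,c̃ ∈ F} p̃_t(ã,c̃) ≤ n² · p̃_t(x̃,x̃)`.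
Both bounds then integrate in `t`.
-/

open scoped NNReal

theorem greenDiag_le_mul {V W : Type*} {p : ℝ → V → V → ℝ} {q : ℝ → W → W → ℝ} {x : V} {y : W}
    (c : ℝ≥0) (h : ∀ t, 0 < t → p t x x ≤ c * q t y y) :
    greenDiag p x ≤ c * greenDiag q y := by
  rw [greenDiag, greenDiag, ← MeasureTheory.lintegral_const_mul' _ _ ENNReal.coe_ne_top]
  refine MeasureTheory.setLIntegral_mono' measurableSet_Ioi fun t ht => ?_
  calc ENNReal.ofReal (p t x x)
      ≤ ENNReal.ofReal (c * q t y y) := ENNReal.ofReal_le_ofReal (h t ht)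
    _ = c * ENNReal.ofReal (q t y y) := by
      rw [ENNReal.ofReal_mul c.coe_nonneg, ENNReal.ofReal_coe_nnreal]

theorem add_le_add_diag_of_posSemidef {V : Type*} {K : V → V → ℝ} {w : V → ℝ}
    (hw : ∀ a, w a ≠ 0)
    (hK : ∀ f : V → ℝ, (Function.support f).Finite →
      0 ≤ ∑' a, ∑' c, K a c * f a * f c * w a * w c)
    (a c : V) : K a c + K c a ≤ K a a + K c c := by
  rcases eq_or_ne a c with rfl | hac
  · exact le_rfl
  classical
  let f : V → ℝ := Pi.single a (w a)⁻¹ - Pi.single c (w c)⁻¹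
  have hf : ∀ z ∉ ({a, c} : Finset V), f z = 0 := by
    intro z hz
    simp only [Finset.mem_insert, Finset.mem_singleton, not_or] at hz
    simp [f, hz.1, hz.2]
  have hquad := hK f ((Finset.finite_toSet {a, c}).subset fun z hz => by
    by_contra hz'
    exact hz (hf z hz'))
  rw [tsum_congr fun u => tsum_eq_sum (s := {a, c}) fun z hz => by simp [hf z hz],
    tsum_eq_sum (s := {a, c}) fun z hz => by simp [hf z hz]] at hquad
  simp only [Finset.sum_pair hac, f, Pi.sub_apply, Pi.single_apply, if_true, if_neg hac,
    if_neg hac.symm] at hquad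
  have ha := hw a
  have hc := hw c
  field_simp at hquad
  linarith

theorem sum_sum_le_card_mul_sum_diag {ι : Type*} (s : Finset ι) (K : ι → ι → ℝ)
    (h : ∀ a ∈ s, ∀ c ∈ s, K a c + K c a ≤ K a a + K c c) :
    ∑ a ∈ s, ∑ c ∈ s, K a c ≤ s.card * ∑ a ∈ s, K a a := by
  have hsymm : ∑ a ∈ s, ∑ c ∈ s, (K a c + K c a) = 2 * ∑ a ∈ s, ∑ c ∈ s, K a c := by
    simp only [Finset.sum_add_distrib]
    rw [Finset.sum_comm (f := fun a c => K c a)]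
    ring
  have hdiag : ∑ a ∈ s, ∑ c ∈ s, (K a a + K c c) = 2 * (s.card * ∑ a ∈ s, K a a) := by
    simp only [Finset.sum_add_distrib, Finset.sum_const, nsmul_eq_mul, ← Finset.mul_sum]
    ring
  have := Finset.sum_le_sum fun a ha => Finset.sum_le_sum fun c hc => h a ha c hc
  linarith

section Covering

variable {X Xc : Type*} {π : Xc → X} {k : X → X → ℝ} {kc : Xc → Xc → ℝ}

def CoveringIdentity (π : Xc → X) (k : X → X → ℝ) (kc : Xc → Xc → ℝ) : Prop :=
  ∀ (x y : X) (xc : Xc), π xc = x →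
    Summable (fun yc : {yc : Xc // π yc = y} => kc xc yc.1) ∧
      k x y = ∑' yc : {yc : Xc // π yc = y}, kc xc yc.1

theorem diag_le_base_diag_of_covering (hpc : ∀ a c, 0 ≤ kc a c)
    (hid : CoveringIdentity π k kc) (xc : Xc) : kc xc xc ≤ k (π xc) (π xc) := by
  obtain ⟨hsum, heq⟩ := hid (π xc) (π xc) xc rfl
  exact heq ▸ hsum.le_tsum ⟨xc, rfl⟩ fun _ _ => hpc _ _

theorem eq_sum_fiber_of_covering (hid : CoveringIdentity π k kc) {x y : X} {xc : Xc}
    (hxc : π xc = x) (hfin : {yc : Xc | π yc = y}.Finite) :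
    k x y = ∑ yc ∈ hfin.toFinset, kc xc yc := by
  rw [(hid x y xc hxc).2, ← Finset.tsum_subtype]
  exact (Equiv.subtypeEquivRight fun _ => hfin.mem_toFinset.symm).tsum_eq
    (fun yc => kc xc yc.1)

theorem diag_eq_of_mem_fiber {Γ : Subgroup (Equiv.Perm Xc)}
    (htrans : ∀ xc yc, π xc = π yc → ∃ γ ∈ Γ, γ xc = yc)
    (hinv : ∀ γ ∈ Γ, ∀ a c, kc (γ a) (γ c) = kc a c) {a xc : Xc} (ha : π xc = π a) :
    kc a a = kc xc xc := by
  obtain ⟨γ, hγ, rfl⟩ := htrans xc a ha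
  exact hinv γ hγ xc xc

theorem base_diag_le_card_mul_of_covering {Γ : Subgroup (Equiv.Perm Xc)} {n : ℕ} (hn : 0 < n)
    (hid : CoveringIdentity π k kc)
    (htrans : ∀ xc yc, π xc = π yc → ∃ γ ∈ Γ, γ xc = yc)
    (hinv : ∀ γ ∈ Γ, ∀ a c, kc (γ a) (γ c) = kc a c)
    (hpair : ∀ a c, kc a c + kc c a ≤ kc a a + kc c c)
    {x : X} (hfin : {yc : Xc | π yc = x}.Finite) (hcard : {yc : Xc | π yc = x}.ncard = n)
    {xc : Xc} (hxc : π xc = x) : k x x ≤ n * kc xc xc := by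
  set F := hfin.toFinset
  have hF : F.card = n := by rw [← Set.ncard_eq_toFinset_card _ hfin, hcard]
  have hmem : ∀ {a}, a ∈ F ↔ π a = x := by simp [F]
  have hsum : n * k x x ≤ n * (n * kc xc xc) :=
    calc (n : ℝ) * k x x = ∑ a ∈ F, ∑ c ∈ F, kc a c := by
          rw [← hF, ← nsmul_eq_mul, ← Finset.sum_const]
          exact Finset.sum_congr rfl fun a ha => eq_sum_fiber_of_covering hid (hmem.1 ha) hfin
      _ ≤ F.card * ∑ a ∈ F, kc a a :=
          sum_sum_le_card_mul_sum_diag F _ fun a _ c _ => hpair a c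
      _ = n * (n * kc xc xc) := by
          rw [Finset.sum_congr rfl fun a ha =>
            diag_eq_of_mem_fiber htrans hinv (hxc.trans (hmem.1 ha).symm)]
          simp [hF]
  exact le_of_mul_le_mul_left hsum (Nat.cast_pos.2 hn)

end Covering

theorem stmt16_general {X Xc : Type*}
    (b : X → X → ℝ) (m : X → ℝ) (bc : Xc → Xc → ℝ) (mc : Xc → ℝ)
    (π : Xc → X) (Γ : Subgroup (Equiv.Perm Xc))
    (hwgc : IsWeightedGraph bc mc)
    (hcov : IsRegularCovering b m bc mc π Γ)
    (p : ℝ → X → X → ℝ) (pc : ℝ → Xc → Xc → ℝ)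
    (hpcnn : ∀ t, 0 < t → ∀ xc yc, 0 ≤ pc t xc yc)
    (hid : ∀ t, 0 < t → ∀ (x y : X) (xc : Xc), π xc = x →
      Summable (fun yc : {yc : Xc // π yc = y} => pc t xc yc.1) ∧
        p t x y = ∑' yc : {yc : Xc // π yc = y}, pc t xc yc.1) :
    (∀ xc : Xc, greenDiag pc xc ≤ greenDiag p (π xc)) ∧
    (∀ C : ℝ, 0 < C → (∀ x : X, greenDiag p x ≤ ENNReal.ofReal C) →
      ∀ xc : Xc, greenDiag pc xc ≤ ENNReal.ofReal C) ∧
    (∀ n : ℕ, 0 < n →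
      (∀ x : X, {yc : Xc | π yc = x}.Finite ∧ {yc : Xc | π yc = x}.ncard = n) →
      (∀ γ ∈ Γ, ∀ t, 0 < t → ∀ a c, pc t (γ a) (γ c) = pc t a c) →
      (∀ t, 0 < t → ∀ f : Xc → ℝ, (Function.support f).Finite →
        0 ≤ ∑' a, ∑' c, pc t a c * f a * f c * mc a * mc c) →
      (∀ (x : X) (xc : Xc), π xc = x → greenDiag p x ≤ n * greenDiag pc xc) ∧
      (∀ C : ℝ, 0 < C → (∀ xc : Xc, greenDiag pc xc ≤ ENNReal.ofReal C) →
        ∀ x : X, greenDiag p x ≤ n * ENNReal.ofReal C)) := by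
  obtain ⟨-, -, -, -, hmpos, -⟩ := hwgc
  obtain ⟨hsurj, -, -, -, -, -, htrans⟩ := hcov
  have hcover_le : ∀ xc, greenDiag pc xc ≤ greenDiag p (π xc) := fun xc => by
    simpa using greenDiag_le_mul 1 fun t ht => by
      simpa using diag_le_base_diag_of_covering (hpcnn t ht) (hid t ht) xc
  refine ⟨hcover_le, fun C _ hC xc => (hcover_le xc).trans (hC _), fun n hn hfib hinv hpsd => ?_⟩
  have hbase_le : ∀ x xc, π xc = x → greenDiag p x ≤ n * greenDiag pc xc := fun x xc hxc => by
    simpa using greenDiag_le_mul n fun t ht =>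
      base_diag_le_card_mul_of_covering hn (hid t ht) htrans (fun γ hγ => hinv γ hγ t ht)
        (add_le_add_diag_of_posSemidef (fun a => (hmpos a).ne') (hpsd t ht))
        (hfib x).1 (hfib x).2 hxc
  refine ⟨hbase_le, fun C _ hC x => ?_⟩
  obtain ⟨xc, rfl⟩ := hsurj x
  exact (hbase_le _ xc rfl).trans (mul_le_mul_right (hC xc) _)

/-- Uniform transience and coverings: (a) the Green's function of the cover is dominated
by that of the base, so uniform transience of the base implies uniform transience of the
cover; (b) for an `n`-sheeted covering with `Γ`-invariant positive semidefinite cover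
kernel, `g(x,x) ≤ n·g̃(x̃,x̃)`, so uniform transience of the cover implies that of the
base. -/
theorem stmt16 {X Xc : Type*} [Countable X] [Countable Xc]
    (b : X → X → ℝ) (m : X → ℝ) (bc : Xc → Xc → ℝ) (mc : Xc → ℝ)
    (π : Xc → X) (Γ : Subgroup (Equiv.Perm Xc))
    (hwg : IsWeightedGraph b m) (hwgc : IsWeightedGraph bc mc)
    (hcov : IsRegularCovering b m bc mc π Γ)
    (p : ℝ → X → X → ℝ) (pc : ℝ → Xc → Xc → ℝ)
    (hpnn : ∀ t, 0 < t → ∀ x y, 0 ≤ p t x y)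
    (hpcnn : ∀ t, 0 < t → ∀ xc yc, 0 ≤ pc t xc yc)
    (hid : ∀ t, 0 < t → ∀ (x y : X) (xc : Xc), π xc = x →
      Summable (fun yc : {yc : Xc // π yc = y} => pc t xc yc.1) ∧
        p t x y = ∑' yc : {yc : Xc // π yc = y}, pc t xc yc.1) :
    (∀ xc : Xc, greenDiag pc xc ≤ greenDiag p (π xc)) ∧
    (∀ C : ℝ, 0 < C → (∀ x : X, greenDiag p x ≤ ENNReal.ofReal C) →
      ∀ xc : Xc, greenDiag pc xc ≤ ENNReal.ofReal C) ∧
    (∀ n : ℕ, 0 < n →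
      (∀ x : X, {yc : Xc | π yc = x}.Finite ∧ {yc : Xc | π yc = x}.ncard = n) →
      (∀ γ ∈ Γ, ∀ t, 0 < t → ∀ a c, pc t (γ a) (γ c) = pc t a c) →
      (∀ t, 0 < t → ∀ f : Xc → ℝ, (Function.support f).Finite →
        0 ≤ ∑' a, ∑' c, pc t a c * f a * f c * mc a * mc c) →
      (∀ (x : X) (xc : Xc), π xc = x → greenDiag p x ≤ n * greenDiag pc xc) ∧
      (∀ C : ℝ, 0 < C → (∀ xc : Xc, greenDiag pc xc ≤ ENNReal.ofReal C) →
        ∀ x : X, greenDiag p x ≤ n * ENNReal.ofReal C)) :=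
  stmt16_general b m bc mc π Γ hwgc hcov p pc hpcnn hid
end
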